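/- arXiv:0902.1871 — 2 statements merged into one kernel-verified Lean document; each statement's English description precedes it below -/
import Mathlib

section
/- McCarthy's 91 function is well-defined and equals the explicit formula: the recursion F(x) = if x > 100 then x − 10 else F(F(x + 11)) terminates for all integers x, and F(x) = 91 for all x ≤ 100, F(x) = x − 10 for x > 100. -/
lemma mc_aux (F : ℤ → ℤ) (hF : ∀ x : ℤ, F x = if 100 < x then x - 10 else F (F (x + 11))) :
    ∀ n : ℕ, ∀ x : ℤ, (100 - x) ≤ n → x ≤ 100 → F x = 91 := by
  intro n
  induction n with
  | zero =>
    intro x h1 h2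
    have hx : x = 100 := by omega
    subst hx
    rw [hF 100]
    norm_num
    rw [hF 111]; norm_num
    rw [hF 101]; norm_num
  | succ n ih =>
    intro x h1 h2
    by_cases h : 89 < x
    · -- x + 11 > 100
      rw [hF x, if_neg (by omega), hF (x + 11), if_pos (by omega)]
      have : x + 11 - 10 = x + 1 := by ring
      rw [this]
      by_cases h' : x = 100
      · subst h'; rw [show (100:ℤ)+1=101 by norm_num, hF 101]; norm_num
      · exact ih (x + 1) (by omega) (by omega)
    · -- x ≤ 89
      rw [hF x, if_neg (by omega)]
      rw [ih (x + 11) (by omega) (by omega)]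
      exact ih 91 (by omega) (by omega)

/-- McCarthy's 91 function is well-defined and equals the explicit
formula: there exists a (total) function satisfying the recursion
`F(x) = if x > 100 then x − 10 else F(F(x + 11))`, and every function satisfying this
recursion equals `fun x => if x > 100 then x − 10 else 91`. -/
theorem stmt15 :
    (∃ F : ℤ → ℤ, ∀ x : ℤ, F x = if 100 < x then x - 10 else F (F (x + 11))) ∧
    (∀ F : ℤ → ℤ, (∀ x : ℤ, F x = if 100 < x then x - 10 else F (F (x + 11))) →
      ∀ x : ℤ, F x = if 100 < x then x - 10 else 91) := by
  constructor
  · refine ⟨fun x => if 100 < x then x - 10 else 91, fun x => ?_⟩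
    simp only
    split_ifs with h1 h2 h3 h4 h5 <;> omega
  · intro F hF x
    by_cases h : 100 < x
    · rw [hF x, if_pos h, if_pos h]
    · rw [if_neg h]
      exact mc_aux F hF (100 - x).toNat x (by omega) (by omega)
end

section
/- The set [91, +∞) is a fixpoint (and sound approximation) of the collecting-semantics F91 equation on the full domain: the set F91(ℤ) of outputs satisfies F91(ℤ) = {x − 10 : x > 100} ∪ F91(F91({x + 11 : x ≤ 100})) and equals {y : y ≥ 91}, where F91 is the (proved-total) McCarthy function extended to sets via direct image. -/
lemma f91_le (F : ℤ → ℤ)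
    (hF : ∀ x : ℤ, F x = if 100 < x then x - 10 else F (F (x + 11))) :
    ∀ n : ℕ, ∀ x : ℤ, (101 - x).toNat ≤ n → x ≤ 100 → F x = 91 := by
  intro n
  induction n using Nat.strong_induction_on with
  | _ n ih =>
    intro x hn hx
    rw [hF x, if_neg (by omega)]
    by_cases h1 : 100 < x + 11
    · rw [hF (x + 11), if_pos h1]
      have hx1 : x + 11 - 10 = x + 1 := by ring
      rw [hx1]
      by_cases h2 : x = 100
      · subst h2
        rw [hF (100 + 1), if_pos (by omega)]; norm_num
      · have hn' : (101 - (x + 1)).toNat < n := by omega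
        exact ih _ hn' (x + 1) le_rfl (by omega)
    · have h2 : F (x + 11) = 91 := by
        have hn' : (101 - (x + 11)).toNat < n := by omega
        exact ih _ hn' (x + 11) le_rfl (by omega)
      rw [h2]
      have hn' : (101 - (91:ℤ)).toNat < n := by omega
      exact ih _ hn' 91 le_rfl (by omega)

/-- for McCarthy's total function `F91`, the collecting semantics on
the full domain satisfies the fixpoint equation
`F91(ℤ) = {x − 10 : x > 100} ∪ F91(F91({x + 11 : x ≤ 100}))` and equals `[91, +∞)`. -/
theorem stmt16 (F : ℤ → ℤ)
    (hF : ∀ x : ℤ, F x = if 100 < x then x - 10 else F (F (x + 11))) :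
    F '' Set.univ =
      ((fun x : ℤ => x - 10) '' {x : ℤ | 100 < x}) ∪
        (F '' (F '' ((fun x : ℤ => x + 11) '' {x : ℤ | x ≤ 100}))) ∧
    F '' Set.univ = {y : ℤ | 91 ≤ y} := by
  have key : ∀ x : ℤ, x ≤ 100 → F x = 91 := fun x hx =>
    f91_le F hF (101 - x).toNat x le_rfl hx
  have keyg : ∀ x : ℤ, 100 < x → F x = x - 10 := fun x hx => by
    rw [hF x, if_pos hx]
  have himg : F '' Set.univ = {y : ℤ | 91 ≤ y} := by
    ext y
    simp only [Set.image_univ, Set.mem_range, Set.mem_setOf_eq]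
    constructor
    · rintro ⟨x, rfl⟩
      by_cases h : 100 < x
      · rw [keyg x h]; omega
      · rw [key x (by omega)]
    · intro hy
      exact ⟨y + 10, by rw [keyg (y + 10) (by omega)]; omega⟩
  refine ⟨?_, himg⟩
  rw [himg]
  apply Set.Subset.antisymm
  · intro y hy
    left
    exact ⟨y + 10, by simp at hy ⊢; omega⟩
  · rintro y (⟨x, hx, rfl⟩ | ⟨x, ⟨z, hz, rfl⟩, rfl⟩)
    · simp at hx ⊢; omega
    · simp only [Set.mem_setOf_eq]
      by_cases h : 100 < F z
      · rw [keyg _ h]; omega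
      · rw [key _ (by omega)]
end
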